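/- arXiv:0905.2895 — 4 statements merged into one kernel-verified Lean document; each statement's English description precedes it below -/
import Mathlib

section
/- Let m ≥ 1 and let x₀, y₀ ∈ SU(2) satisfy [x₀,y₀] = −I. Then the subgroup K_2 of SU(2)^m generated by the center Z(SU(2))^m = {±I}^m together with the diagonal elements (x₀,...,x₀) and (y₀,...,y₀) is isomorphic as a group to (Z/2)^{m-1} × Q_8, where Q_8 is the quaternion group of order 8. -/
/-!
Common setup: the special unitary group `SU(p)`, the central product
`G_{m,p} = SU(p)^m / Δ(Z/p)`, the space `Hom(Z^n, G)` of commuting `n`-tuples,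
and the moduli space `Rep(Z^n, G) = Hom(Z^n, G)/G`.
-/

/-- The special unitary group `SU(p)`: the subgroup of the unitary group of `p × p`
complex matrices consisting of the matrices of determinant `1`. -/
def SUgrp (p : ℕ) : Subgroup (Matrix.unitaryGroup (Fin p) ℂ) :=
  MonoidHom.ker (Matrix.detMonoidHom.comp (Matrix.unitaryGroup (Fin p) ℂ).subtype)

/-- `SU p` as a topological group (topologized as a subspace of the matrices). -/
abbrev SU (p : ℕ) : Type := SUgrp p

/-- The underlying `p × p` complex matrix of an element of `SU p`. -/
noncomputable def SU.mat {p : ℕ} (x : SU p) : Matrix (Fin p) (Fin p) ℂ :=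
  ((x : Matrix.unitaryGroup (Fin p) ℂ) : Matrix (Fin p) (Fin p) ℂ)

/-- The diagonal embedding of a group into an `m`-fold product. -/
def diagHom (G : Type*) [Group G] (m : ℕ) : G →* (Fin m → G) where
  toFun g := fun _ => g
  map_one' := rfl
  map_mul' _ _ := rfl

/-- The diagonal central subgroup `Δ(Z/p) ⊆ SU(p)^m`, consisting of the constant tuples
`(z, ..., z)` with `z` in the center of `SU(p)`. -/
def DeltaZp (p m : ℕ) : Subgroup (Fin m → SU p) :=
  (Subgroup.center (SU p)).map (diagHom (SU p) m)

instance DeltaZp.normal (p m : ℕ) : (DeltaZp p m).Normal := by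
  constructor
  intro x hx g
  obtain ⟨z, hz, rfl⟩ := hx
  refine ⟨z, hz, ?_⟩
  funext i
  simp only [diagHom, MonoidHom.coe_mk, OneHom.coe_mk, Pi.mul_apply, Pi.inv_apply]
  rw [SetLike.mem_coe, Subgroup.mem_center_iff] at hz
  rw [hz (g i), mul_assoc, mul_inv_cancel, mul_one]

/-- The central product `G_{m,p} = SU(p)^m / Δ(Z/p)`, a topological group with the
quotient topology. -/
abbrev Gmp (p m : ℕ) : Type := (Fin m → SU p) ⧸ DeltaZp p m

/-- `Hom(Z^n, G)`: the space of commuting `n`-tuples in `G`, topologized as a subspace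
of `G^n`. -/
def commTuples (G : Type*) [Group G] (n : ℕ) : Set (Fin n → G) :=
  {f | ∀ i j, Commute (f i) (f j)}

/-- The trivial commuting tuple `(1, ..., 1)`. -/
def trivTuple (G : Type*) [Group G] (n : ℕ) : commTuples G n :=
  ⟨fun _ => 1, fun _ _ => Commute.one_left 1⟩

/-- The simultaneous-conjugation equivalence relation on the space of commuting
`n`-tuples in `G`. -/
def conjSetoid (G : Type*) [Group G] (n : ℕ) : Setoid (commTuples G n) where
  r x y := ∃ g : G, ∀ i, (y : Fin n → G) i = g * (x : Fin n → G) i * g⁻¹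
  iseqv := by
    constructor
    · exact fun x => ⟨1, fun i => by group⟩
    · rintro x y ⟨g, hg⟩
      exact ⟨g⁻¹, fun i => by rw [hg i]; group⟩
    · rintro x y z ⟨g, hg⟩ ⟨h, hh⟩
      exact ⟨h * g, fun i => by rw [hh i, hg i]; group⟩

/-- `Rep(Z^n, G) = Hom(Z^n, G)/G`: the quotient of the space of commuting `n`-tuples by
simultaneous conjugation, with the quotient topology. -/
abbrev RepSpace (G : Type*) [Group G] [TopologicalSpace G] (n : ℕ) : Type _ :=
  Quotient (conjSetoid G n)

/-- `N(n,m,p) = p^((m-1)(n-2))·(p^n − 1)·(p^(n-1) − 1)/(p² − 1) + 1` (the division is exact). -/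
def Ncomp (n m p : ℕ) : ℕ :=
  p ^ ((m - 1) * (n - 2)) * (p ^ n - 1) * (p ^ (n - 1) - 1) / (p ^ 2 - 1) + 1

open scoped commutatorElement

/-!
Conjugation by `x₀` sends `y₀` to `-y₀` and vice versa, so both have trace zero and, by
Cayley–Hamilton, square to `-I`. Hence `x₀, y₀` satisfy the defining relations of `Q₈`, and since
`x₀` has order four they generate a faithful copy of `Q₈`, which contains the center `{±I}`.
Therefore `K₂ = {±I}^m · Δ(Q₈)`, and `(ε, q) ↦ (1, ε₁, …, ε_{m-1}) · Δ(q)` is an isomorphism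
`(Z/2)^(m-1) × Q₈ ≃ K₂`: reading off the first coordinate recovers `q`.
-/

section QuaternionRelations

variable {G : Type*} [Group G] {x y c : G}

lemma conj_eq_inv_of_commutatorElement_eq_mul_self (h : ⁅x, y⁆ = x * x) : y * x * y⁻¹ = x⁻¹ := by
  have h' : y * x⁻¹ * y⁻¹ = x := mul_left_cancel (a := x) (by rw [← h, commutatorElement_def]; group)
  calc y * x * y⁻¹ = (y * x⁻¹ * y⁻¹)⁻¹ := by group
    _ = x⁻¹ := by rw [h']

lemma pow_four_eq_one_of_mul_self_eq (hx : x * x = c) (hc : c * c = 1) : x ^ (2 * 2) = 1 := by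
  rw [pow_mul, sq x, hx, sq, hc]

lemma orderOf_eq_four_of_mul_self_eq (hx : x * x = c) (hc : c * c = 1) (hc1 : c ≠ 1) :
    orderOf x = 2 * 2 :=
  orderOf_eq_prime_pow (p := 2) (n := 1) (by rwa [pow_one, sq, hx])
    (pow_four_eq_one_of_mul_self_eq hx hc)

end QuaternionRelations

section ZModPow

variable {G : Type*} [Group G] {x y : G} {N : ℕ}

def zmodPowHom (x : G) (hx : x ^ N = 1) : Multiplicative (ZMod N) →* G :=
  AddMonoidHom.toMultiplicativeLeft <|
    ZMod.lift N ⟨MonoidHom.toAdditiveRight (zpowersHom G x), by simp [hx]⟩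

lemma zmodPowHom_intCast (hx : x ^ N = 1) (z : ℤ) :
    zmodPowHom x hx (.ofAdd (z : ZMod N)) = x ^ z := by
  simp [zmodPowHom]

lemma zmodPowHom_mul_comm (hx : x ^ N = 1) (hyx : y * x * y⁻¹ = x⁻¹) (i : ZMod N) :
    zmodPowHom x hx (.ofAdd i) * y = y * zmodPowHom x hx (.ofAdd (-i)) := by
  obtain ⟨z, rfl⟩ := ZMod.intCast_surjective i
  rw [← Int.cast_neg, zmodPowHom_intCast, zmodPowHom_intCast]
  calc x ^ z * y = (y * x * y⁻¹) ^ (-z) * y := by rw [hyx, inv_zpow', neg_neg]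
    _ = y * x ^ (-z) := by rw [conj_zpow]; group

end ZModPow

namespace QuaternionGroup

variable {G : Type*} [Group G] {n : ℕ} {x y : G}

variable (hx : x ^ (2 * n) = 1) (hy : y ^ 2 = x ^ n) (hyx : y * x * y⁻¹ = x⁻¹)

def lift : QuaternionGroup n →* G where
  toFun
    | a i => zmodPowHom x hx (.ofAdd i)
    | xa i => y * zmodPowHom x hx (.ofAdd i)
  map_one' := map_one (zmodPowHom x hx)
  map_mul' := by
    have hP : ∀ i j : ZMod (2 * n), zmodPowHom x hx (.ofAdd (i + j)) =
        zmodPowHom x hx (.ofAdd i) * zmodPowHom x hx (.ofAdd j) := fun i j => by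
      rw [ofAdd_add, map_mul]
    rintro (i | i) (j | j)
    · simp only [a_mul_a, hP]
    · simp only [a_mul_xa]
      rw [← mul_assoc, zmodPowHom_mul_comm hx hyx, mul_assoc, ← hP, neg_add_eq_sub]
    · simp only [xa_mul_a, hP, mul_assoc]
    · have hyy : y * y = zmodPowHom x hx (.ofAdd (n : ZMod (2 * n))) := by
        rw [← Int.cast_natCast, zmodPowHom_intCast, zpow_natCast, ← hy, sq]
      simp only [xa_mul_xa]
      rw [mul_assoc y, ← mul_assoc _ y, zmodPowHom_mul_comm hx hyx, mul_assoc, ← mul_assoc,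
        hyy, ← hP, ← hP, add_sub_assoc, neg_add_eq_sub]

lemma lift_injective (hord : orderOf x = 2 * n) : Function.Injective (lift hx hy hyx) := by
  rw [injective_iff_map_eq_one]
  rintro (i | i) h <;> obtain ⟨z, rfl⟩ := ZMod.intCast_surjective i
  · replace h : x ^ z = 1 := (zmodPowHom_intCast hx z).symm.trans h
    have hdvd : ((2 * n : ℕ) : ℤ) ∣ z := hord ▸ orderOf_dvd_iff_zpow_eq_one.mpr h
    rw [(ZMod.intCast_zmod_eq_zero_iff_dvd z (2 * n)).mpr hdvd, a_zero]
  · exfalso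
    replace h : y = (x ^ z)⁻¹ :=
      eq_inv_of_mul_eq_one_left ((congrArg (y * ·) (zmodPowHom_intCast hx z)).symm.trans h)
    have hcomm : Commute y x := h ▸ ((Commute.refl x).zpow_left z).inv_left
    have hx2 : x ^ 2 = 1 := by
      rw [sq, mul_eq_one_iff_eq_inv, ← hyx, hcomm.mul_inv_cancel]
    have hxn : x ^ n = 1 := by
      rw [← hy, h, inv_pow, ← zpow_natCast, ← zpow_mul, mul_comm, zpow_mul, zpow_natCast, hx2,
        one_zpow, inv_one]
    have h2 : 2 * n ∣ 2 := hord ▸ orderOf_dvd_of_pow_eq_one hx2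
    have hn : 2 * n ∣ n := hord ▸ orderOf_dvd_of_pow_eq_one hxn
    obtain rfl : n = 0 := by
      by_contra hn0
      exact hn0 (Nat.eq_zero_of_dvd_of_lt hn (by omega))
    simp at h2

lemma range_lift : (lift hx hy hyx).range = Subgroup.closure {x, y} := by
  have hx_mem : x ∈ Subgroup.closure {x, y} := Subgroup.subset_closure (Set.mem_insert x _)
  have hy_mem : y ∈ Subgroup.closure {x, y} :=
    Subgroup.subset_closure (Set.mem_insert_of_mem x rfl)
  apply le_antisymm
  · rintro _ ⟨i | i, rfl⟩ <;> obtain ⟨z, rfl⟩ := ZMod.intCast_surjective i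
    · exact (zmodPowHom_intCast hx z).symm ▸ zpow_mem hx_mem z
    · exact mul_mem hy_mem ((zmodPowHom_intCast hx z).symm ▸ zpow_mem hx_mem z)
  · rw [Subgroup.closure_le, Set.insert_subset_iff, Set.singleton_subset_iff]
    refine ⟨⟨a 1, ?_⟩, ⟨xa 0, ?_⟩⟩
    · change zmodPowHom x hx (.ofAdd 1) = x
      rw [← Int.cast_one, zmodPowHom_intCast, zpow_one]
    · change y * zmodPowHom x hx (.ofAdd 0) = y
      rw [ofAdd_zero, map_one, mul_one]

end QuaternionGroup

section ConsOneMulDiag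

variable {G : Type*} [Group G] {C : Subgroup G} (hC : C ≤ Subgroup.center G) (H : Subgroup G)
  (k : ℕ)

def consOneMulDiag : (Fin k → C) × H →* (Fin (k + 1) → G) where
  toFun p i := Fin.cons (α := fun _ => G) 1 (fun j => (p.1 j : G)) i * p.2
  map_one' := by
    funext i
    cases i using Fin.cases <;> simp
  map_mul' p q := by
    funext i
    cases i using Fin.cases with
    | zero => simp
    | succ j =>
      have hcomm : Commute (p.2 : G) (q.1 j) := Subgroup.mem_center_iff.mp (hC (q.1 j).2) p.2
      simpa using (hcomm.mul_mul_mul_comm _ _).symm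

lemma consOneMulDiag_injective : Function.Injective (consOneMulDiag hC H k) := by
  rw [injective_iff_map_eq_one]
  rintro ⟨ε, h⟩ hεh
  have h1 : h = 1 := Subtype.ext (by simpa [consOneMulDiag] using congrFun hεh 0)
  subst h1
  have hε : ε = 1 :=
    funext fun j => Subtype.ext (by simpa [consOneMulDiag] using congrFun hεh j.succ)
  rw [hε, Prod.mk_one_one]

lemma range_consOneMulDiag (hCH : C ≤ H) {S : Set G} (hS : Subgroup.closure S = H) :
    (consOneMulDiag hC H k).range =
      Subgroup.closure ({f | ∀ i, f i ∈ C} ∪ diagHom G (k + 1) '' S) := by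
  apply le_antisymm
  · rintro _ ⟨⟨ε, h⟩, rfl⟩
    change Fin.cons (α := fun _ => G) 1 (fun j => (ε j : G)) * diagHom G (k + 1) h ∈ _
    refine mul_mem (Subgroup.subset_closure (Or.inl fun i => ?_)) ?_
    · cases i using Fin.cases <;> simp [one_mem]
    · refine Subgroup.closure_mono Set.subset_union_right ?_
      rw [← MonoidHom.map_closure, hS]
      exact Subgroup.mem_map_of_mem _ h.2
  · rw [Subgroup.closure_le]
    rintro f (hf | ⟨s, hs, rfl⟩)
    · refine ⟨(fun j => ⟨(f 0)⁻¹ * f j.succ, mul_mem (inv_mem (hf 0)) (hf j.succ)⟩,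
        ⟨f 0, hCH (hf 0)⟩), funext fun i => ?_⟩
      cases i using Fin.cases with
      | zero => simp [consOneMulDiag]
      | succ j =>
        simp only [consOneMulDiag, MonoidHom.coe_mk, OneHom.coe_mk, Fin.cons_succ]
        rw [mul_assoc, (Subgroup.mem_center_iff.mp (hC (hf 0)) (f j.succ)), inv_mul_cancel_left]
    · refine ⟨(1, ⟨s, hS ▸ Subgroup.subset_closure hs⟩), funext fun i => ?_⟩
      cases i using Fin.cases <;> simp [consOneMulDiag, diagHom]

end ConsOneMulDiag

namespace SU

variable {p : ℕ}

lemma ext {x y : SU p} (h : x.mat = y.mat) : x = y := Subtype.ext (Subtype.ext h)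

@[simp] lemma mat_mul (x y : SU p) : (x * y).mat = x.mat * y.mat := rfl

@[simp] lemma mat_one : (1 : SU p).mat = 1 := rfl

lemma det_mat (x : SU p) : x.mat.det = 1 := x.2

lemma mat_inv_mul (x : SU p) : x⁻¹.mat * x.mat = 1 := by
  rw [← mat_mul, inv_mul_cancel, mat_one]

lemma trace_mat_conj (g h : SU p) : (g * h * g⁻¹).mat.trace = h.mat.trace := by
  rw [mat_mul, mat_mul, Matrix.trace_mul_cycle, mat_inv_mul, one_mul]

noncomputable def ofMat (M : Matrix (Fin p) (Fin p) ℂ) (hM : M * star M = 1) (hdet : M.det = 1) :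
    SU p :=
  ⟨⟨M, Matrix.mem_unitaryGroup_iff.mpr hM⟩, hdet⟩

@[simp] lemma mat_ofMat (M : Matrix (Fin p) (Fin p) ℂ) (hM hdet) : (ofMat M hM hdet).mat = M :=
  rfl

noncomputable def negOne : SU 2 :=
  ofMat (-1) (by rw [star_neg, star_one, neg_mul_neg, one_mul]) (by simp [Matrix.det_neg])

@[simp] lemma mat_negOne : negOne.mat = -1 := rfl

lemma negOne_mem_center : negOne ∈ Subgroup.center (SU 2) :=
  Subgroup.mem_center_iff.mpr fun g => ext (by simp)

lemma negOne_mul_self : negOne * negOne = 1 := ext (by simp)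

lemma negOne_ne_one : negOne ≠ 1 := fun h => by
  have h00 := congrFun (congrFun (congrArg mat h) 0) 0
  norm_num at h00

lemma mul_self_eq_negOne_of_trace_eq_zero {g : SU 2} (h : g.mat.trace = 0) : g * g = negOne := by
  have hCH : g.mat ^ 2 + 1 = 0 := by
    simpa [Matrix.charpoly_fin_two, h, g.det_mat] using Matrix.aeval_self_charpoly g.mat
  refine ext ?_
  rw [mat_mul, ← sq, mat_negOne]
  exact eq_neg_of_add_eq_zero_left hCH

open Complex in
lemma eq_one_or_eq_negOne_of_mem_center {g : SU 2} (hg : g ∈ Subgroup.center (SU 2)) :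
    g = 1 ∨ g = negOne := by
  -- commuting with `d` forces `g` to be diagonal, and then commuting with `w` forces it scalar
  let d : SU 2 := ofMat !![I, 0; 0, -I]
    (by ext i j; fin_cases i <;> fin_cases j <;> simp [Matrix.mul_apply]) (by simp)
  let w : SU 2 := ofMat !![0, 1; -1, 0]
    (by ext i j; fin_cases i <;> fin_cases j <;> simp [Matrix.mul_apply]) (by simp)
  obtain ⟨a, b, c, e, hM⟩ : ∃ a b c e, g.mat = !![a, b; c, e] :=
    ⟨_, _, _, _, Matrix.eta_fin_two _⟩
  have hd := congrArg mat (Subgroup.mem_center_iff.mp hg d)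
  have hw := congrArg mat (Subgroup.mem_center_iff.mp hg w)
  simp only [d, w, mat_mul, mat_ofMat, hM, Matrix.mul_fin_two, EmbeddingLike.apply_eq_iff_eq,
    Matrix.vecCons_inj, and_true] at hd hw
  have hb : b = 0 := by linear_combination (-I / 2) * hd.1.2 + b * I_mul_I
  have hc : c = 0 := by linear_combination (I / 2) * hd.2.1 + c * I_mul_I
  have he : e = a := by linear_combination hw.1.2
  have ha : a * a = 1 := by
    have hdet := g.det_mat
    rw [hM, Matrix.det_fin_two_of, hb, hc, he] at hdet
    linear_combination hdet
  rcases mul_self_eq_one_iff.mp ha with rfl | rfl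
  · left
    refine ext ?_
    rw [hM, hb, hc, he, mat_one, Matrix.one_fin_two]
  · right
    refine ext ?_
    rw [hM, hb, hc, he, mat_negOne]
    ext i j
    fin_cases i <;> fin_cases j <;> simp

lemma trace_mat_eq_zero_of_commutatorElement_eq_negOne {x y : SU 2} (h : ⁅x, y⁆ = negOne) :
    y.mat.trace = 0 := by
  have hconj : x * y * x⁻¹ = negOne * y := by
    rw [← h, commutatorElement_def, inv_mul_cancel_right]
  have htr := trace_mat_conj x y
  rw [hconj, mat_mul, mat_negOne, neg_one_mul, Matrix.trace_neg] at htr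
  exact self_eq_neg.mp htr.symm

variable {x y : SU 2} (h : ⁅x, y⁆ = negOne)
include h

lemma mul_self_eq_negOne_right : y * y = negOne :=
  mul_self_eq_negOne_of_trace_eq_zero (trace_mat_eq_zero_of_commutatorElement_eq_negOne h)

lemma mul_self_eq_negOne_left : x * x = negOne := by
  refine mul_self_eq_negOne_right (x := y) ?_
  rw [← commutatorElement_inv, h, inv_eq_of_mul_eq_one_right negOne_mul_self]

noncomputable def quaternionEquiv : QuaternionGroup 2 ≃* Subgroup.closure {x, y} :=
  have hxx := mul_self_eq_negOne_left h
  have hx : x ^ (2 * 2) = 1 := pow_four_eq_one_of_mul_self_eq hxx negOne_mul_self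
  have hy : y ^ 2 = x ^ 2 := by rw [sq, sq, hxx, mul_self_eq_negOne_right h]
  have hyx : y * x * y⁻¹ = x⁻¹ :=
    conj_eq_inv_of_commutatorElement_eq_mul_self (h.trans hxx.symm)
  have hord := orderOf_eq_four_of_mul_self_eq hxx negOne_mul_self negOne_ne_one
  (MonoidHom.ofInjective (QuaternionGroup.lift_injective hx hy hyx hord)).trans
    (MulEquiv.subgroupCongr (QuaternionGroup.range_lift hx hy hyx))

lemma center_le_closure : Subgroup.center (SU 2) ≤ Subgroup.closure {x, y} := by
  intro g hg
  rcases eq_one_or_eq_negOne_of_mem_center hg with rfl | rfl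
  · exact one_mem _
  · have hx : x ∈ Subgroup.closure {x, y} := Subgroup.subset_closure (Set.mem_insert x _)
    exact mul_self_eq_negOne_left h ▸ mul_mem hx hx

omit h in
lemma card_center : Nat.card (Subgroup.center (SU 2)) = 2 := by
  have hcenter : (Subgroup.center (SU 2) : Set (SU 2)) = {1, negOne} :=
    Set.Subset.antisymm (fun _ hg => eq_one_or_eq_negOne_of_mem_center hg)
      (Set.insert_subset_iff.mpr ⟨one_mem _, Set.singleton_subset_iff.mpr negOne_mem_center⟩)
  rw [← SetLike.coe_sort_coe, hcenter, Nat.card_coe_set_eq, Set.ncard_pair negOne_ne_one.symm]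

end SU

/-- For `m ≥ 1` and `x₀, y₀ ∈ SU(2)` with `⁅x₀,y₀⁆ = -I`, the subgroup `K₂` of `SU(2)^m`
generated by the center `{±I}^m` together with the diagonal elements `(x₀,...,x₀)` and
`(y₀,...,y₀)` is isomorphic to `(Z/2)^(m-1) × Q₈`. -/
theorem Ktwo_iso (m : ℕ) (hm : 1 ≤ m) (x₀ y₀ : SU 2) (hxy : SU.mat ⁅x₀, y₀⁆ = -1) :
    Nonempty
      ((Subgroup.closure
          (({f | ∀ i, f i ∈ Subgroup.center (SU 2)} : Set (Fin m → SU 2))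
            ∪ ({fun _ => x₀, fun _ => y₀} : Set (Fin m → SU 2))))
        ≃* ((Fin (m - 1) → Multiplicative (ZMod 2)) × QuaternionGroup 2)) := by
  obtain ⟨k, rfl⟩ : ∃ k, m = k + 1 := ⟨m - 1, by omega⟩
  have h : ⁅x₀, y₀⁆ = SU.negOne := SU.ext (by rw [hxy, SU.mat_negOne])
  have hK := range_consOneMulDiag le_rfl _ k (SU.center_le_closure h) rfl
  rw [Set.image_pair] at hK
  let eC : Subgroup.center (SU 2) ≃* Multiplicative (ZMod 2) :=
    mulEquivOfPrimeCardEq SU.card_center (by simp)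
  exact ⟨(MulEquiv.subgroupCongr hK.symm).trans <|
    (MonoidHom.ofInjective (consOneMulDiag_injective le_rfl _ k)).symm.trans <|
      .prodCongr (.piCongrRight fun _ => eC) (SU.quaternionEquiv h).symm⟩
end

section
/- Let p be a prime and let c ∈ Z(SU(p)) with c ≠ 1. If (x,y) and (x',y') are pairs of elements of SU(p) with [x,y] = [x',y'] = c, then the pairs are conjugate: there exists g ∈ SU(p) with x' = g x g⁻¹ and y' = g y g⁻¹. -/
/-!
Write `X, Y` for the matrices of `x, y`, so that `X * Y = ζ • (Y * X)` where `c = ζ • 1` and `ζ`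
is a primitive `p`-th root of unity (the center of `SU(p)` is scalar because unitaries span all
matrices). If `Y v = μ v`, then `X^k v` is an eigenvector of `Y` for `ζ⁻¹^k μ`; these `p`
eigenvalues are distinct, so `v, X v, …, X^(p-1) v` is an eigenbasis of `Y` and `X^p` is scalar.
Since `det X = det Y = 1`, computing determinants in such bases fixes `X^p` and `μ^p`
independently of the pair, so the map `U` sending one such basis to the other (for a common
eigenvalue `μ`) intertwines the two pairs. Only scalars commute with both `X` and `Y`, so
`Uᴴ * U` is a positive scalar, and a rescaling of `U` lies in `SU(p)`.
-/

open Matrix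

theorem mul_pow_eq_smul_of_mul_eq_smul {K R : Type*} [CommSemiring K] [Semiring R] [Algebra K R]
    {ω : K} {a b : R} (h : b * a = ω • (a * b)) (k : ℕ) :
    b * a ^ k = ω ^ k • (a ^ k * b) := by
  induction k with
  | zero => simp
  | succ k ih =>
    rw [pow_succ, ← mul_assoc, ih, smul_mul_assoc, mul_assoc, h, mul_smul_comm, smul_smul,
      ← mul_assoc, pow_succ]

theorem pow_eq_smul_pow_mod {K R : Type*} [CommSemiring K] [Semiring R] [Algebra K R]
    {p : ℕ} {τ : K} {a : R} (h : a ^ p = τ • 1) (k : ℕ) : a ^ k = τ ^ (k / p) • a ^ (k % p) := by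
  conv_lhs => rw [← Nat.div_add_mod k p, pow_add, pow_mul, h, smul_pow, one_pow, smul_one_mul]

theorem IsPrimitiveRoot.injective_pow_mul {K : Type*} [CommRing K] [IsDomain K] {ω μ : K} {p : ℕ}
    (hω : IsPrimitiveRoot ω p) (hμ : μ ≠ 0) : Function.Injective fun i : Fin p => ω ^ (i : ℕ) * μ :=
  fun i j hij => Fin.ext (hω.pow_inj i.2 j.2 (mul_right_cancel₀ hμ hij))

theorem Matrix.exists_mulVec_eq_smul {K n : Type*} [Field K] [IsAlgClosed K] [Fintype n]
    [Nonempty n] (M : Matrix n n K) : ∃ μ : K, ∃ v ≠ 0, M *ᵥ v = μ • v := by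
  obtain ⟨μ, hμ⟩ := Module.End.exists_eigenvalue (mulVecLin M)
  obtain ⟨v, hv⟩ := hμ.exists_hasEigenvector
  exact ⟨μ, v, hv.2, Module.End.mem_eigenspace_iff.1 hv.1⟩

section Eigenbasis

variable {K ι n : Type*} [Field K] [Fintype n] [DecidableEq n]
  {M : Matrix n n K} {b : Module.Basis ι K (n → K)} {f : ι → K}

theorem Matrix.ext_of_basis (b : Module.Basis ι K (n → K)) {N : Matrix n n K}
    (h : ∀ i, M *ᵥ b i = N *ᵥ b i) : M = N :=
  toLin'.injective (b.ext h)

theorem Matrix.pow_eq_smul_one_of_mulVec_basis (hM : ∀ i, M *ᵥ b i = f i • b i) {k : ℕ} {c : K}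
    (hf : ∀ i, f i ^ k = c) : M ^ k = c • 1 := by
  refine ext_of_basis b fun i => ?_
  have hpow : ∀ k, (M ^ k) *ᵥ b i = f i ^ k • b i := fun k => by
    induction k with
    | zero => simp
    | succ k ih => rw [pow_succ', ← mulVec_mulVec, ih, mulVec_smul, hM, smul_smul, pow_succ]
  rw [hpow, hf, smul_mulVec, one_mulVec]

variable [Fintype ι] [DecidableEq ι]

theorem Matrix.toMatrix_toLin'_eq_diagonal_of_mulVec_basis (hM : ∀ i, M *ᵥ b i = f i • b i) :
    LinearMap.toMatrix b b (toLin' M) = diagonal f := by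
  ext i j
  rw [LinearMap.toMatrix_apply, toLin'_apply, hM, map_smul, b.repr_self, Finsupp.smul_single,
    smul_eq_mul, mul_one, diagonal_apply, Finsupp.single_apply]
  grind

theorem Matrix.det_eq_prod_of_mulVec_basis (hM : ∀ i, M *ᵥ b i = f i • b i) :
    M.det = ∏ i, f i := by
  rw [← LinearMap.det_toLin', ← LinearMap.det_toMatrix b,
    toMatrix_toLin'_eq_diagonal_of_mulVec_basis hM, det_diagonal]

theorem Matrix.eq_repr_smul_of_mulVec_basis (hM : ∀ i, M *ᵥ b i = f i • b i)
    (hf : Function.Injective f) {j : ι} {w : n → K} (hw : M *ᵥ w = f j • w) :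
    w = b.repr w j • b j := by
  have hrepr : diagonal f *ᵥ b.repr w = f j • b.repr w := by
    rw [← toMatrix_toLin'_eq_diagonal_of_mulVec_basis hM, LinearMap.toMatrix_mulVec_repr,
      toLin'_apply, hw, map_smul, Finsupp.coe_smul]
  have hcoord : ∀ i ≠ j, b.repr w i = 0 := fun i hij => by
    have h := congrFun hrepr i
    rw [mulVec_diagonal, Pi.smul_apply, smul_eq_mul] at h
    exact (mul_eq_mul_right_iff.mp h).resolve_left (hf.ne hij)
  conv_lhs => rw [← b.sum_repr w]
  exact Finset.sum_eq_single j (fun i _ hij => by rw [hcoord i hij, zero_smul])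
    (fun h => absurd (Finset.mem_univ j) h)

end Eigenbasis

section WeylPair

variable {K n : Type*} [Field K] [Fintype n] [DecidableEq n] {p : ℕ} {ω μ : K}
  {A B : Matrix n n K} {v : n → K}

theorem Matrix.ne_zero_of_mulVec_eq_smul {M : Matrix n n K} {w : n → K} {ν : K} (hM : IsUnit M)
    (hw : w ≠ 0) (hMw : M *ᵥ w = ν • w) : ν ≠ 0 := by
  rintro rfl
  exact hw (mulVec_injective_iff_isUnit.2 hM (by rw [hMw, zero_smul, mulVec_zero]))

theorem Matrix.pow_mulVec_ne_zero (hA : IsUnit A) (hv : v ≠ 0) (k : ℕ) : A ^ k *ᵥ v ≠ 0 :=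
  fun h => hv (mulVec_injective_iff_isUnit.2 (hA.pow k) (by rw [h, mulVec_zero]))

theorem Matrix.mulVec_pow_mulVec_of_mul_eq_smul (hBA : B * A = ω • (A * B))
    (hBv : B *ᵥ v = μ • v) (k : ℕ) : B *ᵥ (A ^ k *ᵥ v) = (ω ^ k * μ) • (A ^ k *ᵥ v) := by
  rw [mulVec_mulVec, mul_pow_eq_smul_of_mul_eq_smul hBA, smul_mulVec, ← mulVec_mulVec, hBv,
    mulVec_smul, smul_smul]

theorem Matrix.linearIndependent_pow_mulVec (hω : IsPrimitiveRoot ω p) (hA : IsUnit A)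
    (hBA : B * A = ω • (A * B)) (hμ : μ ≠ 0) (hv : v ≠ 0) (hBv : B *ᵥ v = μ • v) :
    LinearIndependent K fun i : Fin p => A ^ (i : ℕ) *ᵥ v := by
  refine Module.End.eigenvectors_linearIndependent' (mulVecLin B) _ (hω.injective_pow_mul hμ) _
    fun i => ⟨?_, pow_mulVec_ne_zero hA hv i⟩
  exact Module.End.mem_eigenspace_iff.2 (mulVec_pow_mulVec_of_mul_eq_smul hBA hBv i)

theorem Matrix.exists_mulVec_eq_smul_of_pow_eq [NeZero p] (hω : IsPrimitiveRoot ω p)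
    (hA : IsUnit A) (hBA : B * A = ω • (A * B)) (hμ : μ ≠ 0) (hv : v ≠ 0) (hBv : B *ᵥ v = μ • v)
    {ν : K} (hν : ν ^ p = μ ^ p) : ∃ w ≠ 0, B *ᵥ w = ν • w := by
  obtain ⟨k, -, hk⟩ := hω.eq_pow_of_pow_eq_one (ξ := ν / μ)
    (by rw [div_pow, hν, div_self (pow_ne_zero p hμ)])
  refine ⟨A ^ k *ᵥ v, pow_mulVec_ne_zero hA hv k, ?_⟩
  rw [mulVec_pow_mulVec_of_mul_eq_smul hBA hBv, hk, div_mul_cancel₀ ν hμ]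

end WeylPair

section WeylPairFin

variable {K : Type*} [Field K] {p : ℕ} {ω μ : K} {A B : Matrix (Fin p) (Fin p) K} {v : Fin p → K}

theorem Matrix.exists_basis_pow_mulVec (hω : IsPrimitiveRoot ω p) (hA : IsUnit A)
    (hBA : B * A = ω • (A * B)) (hμ : μ ≠ 0) (hv : v ≠ 0) (hBv : B *ᵥ v = μ • v) :
    ∃ b : Module.Basis (Fin p) K (Fin p → K),
      (∀ i, b i = A ^ (i : ℕ) *ᵥ v) ∧ ∀ i, B *ᵥ b i = (ω ^ (i : ℕ) * μ) • b i := by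
  refine ⟨basisOfLinearIndependentOfCardEqFinrank' _
    (linearIndependent_pow_mulVec hω hA hBA hμ hv hBv) (by simp), fun i => by simp, fun i => ?_⟩
  simpa using mulVec_pow_mulVec_of_mul_eq_smul hBA hBv i

theorem Matrix.pow_eq_smul_one_of_mulVec_eq_smul (hω : IsPrimitiveRoot ω p) (hA : IsUnit A)
    (hBA : B * A = ω • (A * B)) (hμ : μ ≠ 0) (hv : v ≠ 0) (hBv : B *ᵥ v = μ • v) :
    B ^ p = μ ^ p • 1 := by
  obtain ⟨b, -, hBb⟩ := exists_basis_pow_mulVec hω hA hBA hμ hv hBv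
  refine pow_eq_smul_one_of_mulVec_basis hBb fun i => ?_
  rw [mul_pow, ← pow_mul, pow_mul', hω.pow_eq_one, one_pow, one_mul]

theorem Matrix.det_eq_of_mulVec_eq_smul (hω : IsPrimitiveRoot ω p) (hA : IsUnit A)
    (hBA : B * A = ω • (A * B)) (hμ : μ ≠ 0) (hv : v ≠ 0) (hBv : B *ᵥ v = μ • v) :
    B.det = ω ^ (∑ i : Fin p, (i : ℕ)) * μ ^ p := by
  obtain ⟨b, -, hBb⟩ := exists_basis_pow_mulVec hω hA hBA hμ hv hBv
  rw [det_eq_prod_of_mulVec_basis hBb, Finset.prod_mul_distrib, Finset.prod_pow_eq_pow_sum,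
    Finset.prod_const, Finset.card_univ, Fintype.card_fin]

theorem Matrix.eigenvalue_pow_eq_of_det_eq_one (hω : IsPrimitiveRoot ω p) (hA : IsUnit A)
    (hBA : B * A = ω • (A * B)) (hB : B.det = 1) (hv : v ≠ 0) (hBv : B *ᵥ v = μ • v) :
    μ ^ p = (ω ^ (∑ i : Fin p, (i : ℕ)))⁻¹ := by
  have hμ := ne_zero_of_mulVec_eq_smul ((isUnit_iff_isUnit_det B).2 (hB ▸ isUnit_one)) hv hBv
  exact eq_inv_of_mul_eq_one_right (by rw [← det_eq_of_mulVec_eq_smul hω hA hBA hμ hv hBv, hB])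

theorem Matrix.pow_card_eq_of_det_eq_one [IsAlgClosed K] [NeZero p] (hω : IsPrimitiveRoot ω p)
    (hA : IsUnit A) (hBA : B * A = ω • (A * B)) (hB : B.det = 1) :
    B ^ p = (ω ^ (∑ i : Fin p, (i : ℕ)))⁻¹ • 1 := by
  obtain ⟨μ, v, hv, hBv⟩ := exists_mulVec_eq_smul B
  have hμ := ne_zero_of_mulVec_eq_smul ((isUnit_iff_isUnit_det B).2 (hB ▸ isUnit_one)) hv hBv
  rw [pow_eq_smul_one_of_mulVec_eq_smul hω hA hBA hμ hv hBv,
    eigenvalue_pow_eq_of_det_eq_one hω hA hBA hB hv hBv]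

theorem Matrix.exists_eq_smul_one_of_commute [NeZero p] (hω : IsPrimitiveRoot ω p)
    (hA : IsUnit A) (hBA : B * A = ω • (A * B)) (hμ : μ ≠ 0) (hv : v ≠ 0)
    (hBv : B *ᵥ v = μ • v) {M : Matrix (Fin p) (Fin p) K} (hMA : Commute M A)
    (hMB : Commute M B) : ∃ d : K, M = d • 1 := by
  obtain ⟨b, hb, hBb⟩ := exists_basis_pow_mulVec hω hA hBA hμ hv hBv
  have hb0 : b 0 = v := by simp [hb]
  have hMv : B *ᵥ (M *ᵥ v) = (ω ^ ((0 : Fin p) : ℕ) * μ) • (M *ᵥ v) := by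
    rw [mulVec_mulVec, ← hMB.eq, ← mulVec_mulVec, hBv, mulVec_smul, Fin.val_zero, pow_zero, one_mul]
  obtain ⟨d, hd⟩ : ∃ d : K, M *ᵥ v = d • v :=
    ⟨_, hb0 ▸ eq_repr_smul_of_mulVec_basis hBb (hω.injective_pow_mul hμ) hMv⟩
  refine ⟨d, ext_of_basis b fun i => ?_⟩
  rw [hb, mulVec_mulVec, (hMA.pow_right i).eq, ← mulVec_mulVec, hd, mulVec_smul, smul_mulVec,
    one_mulVec]

theorem Matrix.exists_isUnit_mul_eq_mul [NeZero p] (hω : IsPrimitiveRoot ω p)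
    {A' B' : Matrix (Fin p) (Fin p) K} {v' : Fin p → K} {τ : K} (hA : IsUnit A) (hA' : IsUnit A')
    (hBA : B * A = ω • (A * B)) (hB'A' : B' * A' = ω • (A' * B'))
    (hAp : A ^ p = τ • 1) (hA'p : A' ^ p = τ • 1) (hμ : μ ≠ 0)
    (hv : v ≠ 0) (hBv : B *ᵥ v = μ • v) (hv' : v' ≠ 0) (hB'v' : B' *ᵥ v' = μ • v') :
    ∃ U : Matrix (Fin p) (Fin p) K, IsUnit U ∧ U * A = A' * U ∧ U * B = B' * U := by
  obtain ⟨b, hb, hBb⟩ := exists_basis_pow_mulVec hω hA hBA hμ hv hBv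
  obtain ⟨b', hb', hB'b'⟩ := exists_basis_pow_mulVec hω hA' hB'A' hμ hv' hB'v'
  set e := b.equiv b' (Equiv.refl _)
  set U := LinearMap.toMatrix' e.toLinearMap
  have hUe : ∀ w, U *ᵥ w = e w := LinearMap.toMatrix'_mulVec _
  have hUb : ∀ i, U *ᵥ b i = b' i := fun i => by rw [hUe, b.equiv_apply, Equiv.refl_apply]
  have hUpow : ∀ k, U *ᵥ (A ^ k *ᵥ v) = A' ^ k *ᵥ v' := fun k => by
    have hb_mod := hb ⟨k % p, Nat.mod_lt k (NeZero.pos p)⟩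
    have hb'_mod := hb' ⟨k % p, Nat.mod_lt k (NeZero.pos p)⟩
    rw [pow_eq_smul_pow_mod hAp, pow_eq_smul_pow_mod hA'p, smul_mulVec, smul_mulVec, mulVec_smul,
      ← hb_mod, ← hb'_mod, hUb]
  refine ⟨U, mulVec_injective_iff_isUnit.1 fun w w' h => e.injective (by rwa [← hUe, ← hUe]),
    ext_of_basis b fun i => ?_, ext_of_basis b fun i => ?_⟩
  · rw [← mulVec_mulVec, ← mulVec_mulVec, hUb, hb, hb', mulVec_mulVec _ A, ← pow_succ', hUpow,
      pow_succ', ← mulVec_mulVec]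
  · rw [← mulVec_mulVec, ← mulVec_mulVec, hBb, mulVec_smul, hUb, hB'b']

end WeylPairFin

theorem Unitary.commute_star_mul_self_of_mul_eq_mul {R : Type*} [Monoid R] [StarMul R] {u a b : R}
    (ha : a ∈ unitary R) (hb : b ∈ unitary R) (h : u * a = b * u) :
    Commute (star u * u) a := by
  have hstar : star u * b = a * star u := by
    calc star u * b = a * star a * (star u * b) := by rw [Unitary.mul_star_self_of_mem ha, one_mul]
      _ = a * star (u * a) * b := by rw [star_mul]; simp only [mul_assoc]
      _ = a * star u * (star b * b) := by rw [h, star_mul]; simp only [mul_assoc]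
      _ = a * star u := by rw [Unitary.star_mul_self_of_mem hb, mul_one]
  calc star u * u * a = star u * b * u := by rw [mul_assoc, h, ← mul_assoc]
    _ = a * (star u * u) := by rw [hstar, mul_assoc]

open scoped ComplexOrder in
theorem Complex.exists_star_mul_self_mul_eq_one {d : ℂ} (hd : 0 < d) :
    ∃ r : ℂ, star r * r * d = 1 := by
  obtain ⟨hre, him⟩ := Complex.pos_iff.1 hd
  obtain ⟨s, hs, rfl⟩ : ∃ s : ℝ, 0 < s ∧ (s : ℂ) = d :=
    ⟨d.re, hre, Complex.ext rfl (by simp [him])⟩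
  refine ⟨((Real.sqrt s)⁻¹ : ℝ), ?_⟩
  rw [Complex.star_def, Complex.conj_ofReal, ← Complex.ofReal_mul, ← Complex.ofReal_mul, ← sq,
    inv_pow, Real.sq_sqrt hs.le, inv_mul_cancel₀ hs.ne', Complex.ofReal_one]

section Unitary

variable {n : Type*} [Fintype n] [DecidableEq n]

open scoped Matrix.Norms.L2Operator in
theorem Matrix.exists_eq_smul_one_of_forall_commute_unitary {C : Matrix n n ℂ}
    (hC : ∀ U ∈ unitaryGroup n ℂ, Commute U C) : ∃ d : ℂ, C = d • 1 := by
  have hcenter : C ∈ Set.center (Matrix n n ℂ) := by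
    refine Semigroup.mem_center_iff.2 fun M => ?_
    have hM : M ∈ Submodule.span ℂ (unitary (Matrix n n ℂ) : Set (Matrix n n ℂ)) := by
      rw [CStarAlgebra.span_unitary]
      trivial
    induction hM using Submodule.span_induction with
    | mem U hU => exact (hC U hU).eq
    | zero => rw [zero_mul, mul_zero]
    | add M N _ _ hM hN => rw [add_mul, mul_add, hM, hN]
    | smul r M _ hM => rw [smul_mul_assoc, mul_smul_comm, hM]
  rw [center_eq_range] at hcenter
  obtain ⟨d, hd⟩ := hcenter
  exact ⟨d, by rw [← hd, scalar_apply, smul_one_eq_diagonal]⟩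

open scoped ComplexOrder in
theorem Matrix.exists_smul_mem_unitaryGroup [Nonempty n] {U : Matrix n n ℂ} (hU : IsUnit U) {d : ℂ}
    (hd : star U * U = d • 1) : ∃ r : ℂ, r • U ∈ unitaryGroup n ℂ := by
  obtain ⟨i⟩ := ‹Nonempty n›
  have hpos : 0 < d := by
    have := (PosDef.conjTranspose_mul_self U (mulVec_injective_iff_isUnit.2 hU)).diag_pos (i := i)
    rwa [← star_eq_conjTranspose, hd, smul_apply, one_apply_eq, smul_eq_mul, mul_one] at this
  obtain ⟨r, hr⟩ := Complex.exists_star_mul_self_mul_eq_one hpos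
  refine ⟨r, mem_unitaryGroup_iff'.2 ?_⟩
  rw [star_smul, smul_mul_smul_comm, hd, smul_smul, hr, one_smul]

end Unitary

theorem Complex.mem_unitary_of_pow_mem_unitary {ω : ℂ} {p : ℕ} (hp : p ≠ 0)
    (h : ω ^ p ∈ unitary ℂ) : ω ∈ unitary ℂ := by
  rw [Unitary.mem_iff_star_mul_self, star_pow, ← mul_pow] at h
  rw [Unitary.mem_iff_star_mul_self]
  rw [Complex.star_def, ← Complex.normSq_eq_conj_mul_self] at h ⊢
  norm_cast at h ⊢
  exact (pow_eq_one_iff_of_nonneg (Complex.normSq_nonneg ω) hp).1 h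

namespace SU

variable {p : ℕ}

theorem mat_mul_s8 (a b : SU p) : (a * b).mat = a.mat * b.mat := rfl

theorem mat_mem_unitaryGroup (a : SU p) : a.mat ∈ unitaryGroup (Fin p) ℂ := a.1.2

theorem det_mat_s8 (a : SU p) : a.mat.det = 1 := MonoidHom.mem_ker.1 a.2

theorem isUnit_mat (a : SU p) : IsUnit a.mat :=
  (isUnit_iff_isUnit_det _).2 (a.det_mat_s8 ▸ isUnit_one)

theorem mat_injective : Function.Injective (SU.mat : SU p → Matrix (Fin p) (Fin p) ℂ) :=
  fun _ _ h => Subtype.ext (Subtype.ext h)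

theorem exists_mat_eq {M : Matrix (Fin p) (Fin p) ℂ} (hM : M ∈ unitaryGroup (Fin p) ℂ)
    (hdet : M.det = 1) : ∃ s : SU p, s.mat = M :=
  ⟨⟨⟨M, hM⟩, MonoidHom.mem_ker.2 hdet⟩, rfl⟩

theorem exists_mat_eq_smul [NeZero p] {g : Matrix (Fin p) (Fin p) ℂ}
    (hg : g ∈ unitaryGroup (Fin p) ℂ) : ∃ s : SU p, ∃ ω : ℂ, ω ≠ 0 ∧ s.mat = ω • g := by
  have hdet : g.det ∈ unitary ℂ := det_of_mem_unitary hg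
  obtain ⟨ω, hω⟩ := IsAlgClosed.exists_pow_nat_eq (star g.det) (NeZero.pos p)
  have hω_unitary : ω ∈ unitary ℂ :=
    Complex.mem_unitary_of_pow_mem_unitary (NeZero.ne p) (hω ▸ Unitary.star_mem hdet)
  obtain ⟨s, hs⟩ := exists_mat_eq (Unitary.smul_mem_of_mem hω_unitary hg) (by
    rw [det_smul, Fintype.card_fin, hω, Unitary.star_mul_self_of_mem hdet])
  exact ⟨s, ω, left_ne_zero_of_mul_eq_one (Unitary.mul_star_self_of_mem hω_unitary), hs⟩

theorem exists_mat_eq_smul_one_of_mem_center [NeZero p] {c : SU p}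
    (hc : c ∈ Subgroup.center (SU p)) : ∃ ζ : ℂ, c.mat = ζ • 1 ∧ ζ ^ p = 1 := by
  obtain ⟨ζ, hζ⟩ := exists_eq_smul_one_of_forall_commute_unitary fun g hg => by
    obtain ⟨s, ω, hω, hs⟩ := exists_mat_eq_smul (p := p) hg
    have hsc := congrArg SU.mat (Subgroup.mem_center_iff.1 hc s)
    rw [mat_mul_s8, mat_mul_s8, hs, smul_mul_assoc, mul_smul_comm] at hsc
    exact smul_right_injective _ hω hsc
  refine ⟨ζ, hζ, ?_⟩
  simpa [hζ, det_smul] using c.det_mat_s8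

theorem exists_mul_eq_mul_of_mul_eq_smul_mul [NeZero p] {ζ : ℂ} (hζ : IsPrimitiveRoot ζ p)
    {x y x' y' : SU p} (hxy : x.mat * y.mat = ζ • (y.mat * x.mat))
    (hxy' : x'.mat * y'.mat = ζ • (y'.mat * x'.mat)) :
    ∃ g : SU p, g * x = x' * g ∧ g * y = y' * g := by
  have hyx : ∀ {a b : SU p}, a.mat * b.mat = ζ • (b.mat * a.mat) →
      b.mat * a.mat = ζ⁻¹ • (a.mat * b.mat) := fun h => by
    rw [h, smul_smul, inv_mul_cancel₀ (hζ.ne_zero (NeZero.ne p)), one_smul]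
  have hxp := pow_card_eq_of_det_eq_one hζ y.isUnit_mat hxy x.det_mat_s8
  have hx'p := pow_card_eq_of_det_eq_one hζ y'.isUnit_mat hxy' x'.det_mat_s8
  obtain ⟨μ, v, hv, hyv⟩ := exists_mulVec_eq_smul y.mat
  obtain ⟨μ', v', hv', hy'v'⟩ := exists_mulVec_eq_smul y'.mat
  have hμ := ne_zero_of_mulVec_eq_smul y.isUnit_mat hv hyv
  have hμμ' : μ ^ p = μ' ^ p := by
    rw [eigenvalue_pow_eq_of_det_eq_one hζ.inv x.isUnit_mat (hyx hxy) y.det_mat_s8 hv hyv,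
      eigenvalue_pow_eq_of_det_eq_one hζ.inv x'.isUnit_mat (hyx hxy') y'.det_mat_s8 hv' hy'v']
  obtain ⟨w', hw', hy'w'⟩ := exists_mulVec_eq_smul_of_pow_eq hζ.inv x'.isUnit_mat (hyx hxy')
    (ne_zero_of_mulVec_eq_smul y'.isUnit_mat hv' hy'v') hv' hy'v' hμμ'
  obtain ⟨U, hU, hUx, hUy⟩ := exists_isUnit_mul_eq_mul hζ.inv x.isUnit_mat x'.isUnit_mat
    (hyx hxy) (hyx hxy') hxp hx'p hμ hv hyv hw' hy'w'
  obtain ⟨d, hd⟩ := exists_eq_smul_one_of_commute hζ.inv x.isUnit_mat (hyx hxy) hμ hv hyv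
    (Unitary.commute_star_mul_self_of_mul_eq_mul x.mat_mem_unitaryGroup
      x'.mat_mem_unitaryGroup hUx)
    (Unitary.commute_star_mul_self_of_mul_eq_mul y.mat_mem_unitaryGroup
      y'.mat_mem_unitaryGroup hUy)
  obtain ⟨r, hr⟩ := exists_smul_mem_unitaryGroup hU hd
  obtain ⟨g, ω, -, hg⟩ := exists_mat_eq_smul hr
  refine ⟨g, mat_injective ?_, mat_injective ?_⟩ <;>
    simp only [mat_mul_s8, hg, smul_mul_assoc, mul_smul_comm, hUx, hUy]

end SU

open scoped commutatorElement

/-- For a prime `p` and a nontrivial central element `c` of `SU(p)`, any two pairs of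
elements of `SU(p)` with commutator `c` are simultaneously conjugate. -/
theorem commutator_pairs_conjugate (p : ℕ) (hp : p.Prime)
    (c : SU p) (hc : c ∈ Subgroup.center (SU p)) (hc1 : c ≠ 1)
    (x y x' y' : SU p) (hxy : ⁅x, y⁆ = c) (hxy' : ⁅x', y'⁆ = c) :
    ∃ g : SU p, x' = g * x * g⁻¹ ∧ y' = g * y * g⁻¹ := by
  have : NeZero p := ⟨hp.ne_zero⟩
  obtain ⟨ζ, hcζ, hζp⟩ := SU.exists_mat_eq_smul_one_of_mem_center hc
  have hζ1 : ζ ≠ 1 := fun h => hc1 (SU.mat_injective (by rw [hcζ, h, one_smul]; rfl))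
  have : Fact p.Prime := ⟨hp⟩
  have hζ : IsPrimitiveRoot ζ p := orderOf_eq_prime hζp hζ1 ▸ IsPrimitiveRoot.orderOf ζ
  have hrel : ∀ a b : SU p, ⁅a, b⁆ = c → a.mat * b.mat = ζ • (b.mat * a.mat) := fun a b hab => by
    rw [← SU.mat_mul_s8, ← SU.mat_mul_s8, show a * b = c * (b * a) by rw [← hab]; group, SU.mat_mul_s8,
      hcζ, smul_one_mul]
  obtain ⟨g, hgx, hgy⟩ :=
    SU.exists_mul_eq_mul_of_mul_eq_smul_mul hζ (hrel x y hxy) (hrel x' y' hxy')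
  exact ⟨g, eq_mul_inv_of_mul_eq hgx.symm, eq_mul_inv_of_mul_eq hgy.symm⟩
end

section
/- Let p be a prime, m ≥ 1, and c ∈ Z(SU(p)) with c ≠ 1. Suppose x̲ = (x_1,...,x_m), y̲ = (y_1,...,y_m) and z̲ = (z_1,...,z_m) are elements of SU(p)^m such that [x_i, y_i] = c for all i, and there are integers a, b with 0 ≤ a, b < p such that [x_i, z_i] = c^b and [y_i, z_i] = c^a for all i. Then there exists w̲ = (w_1,...,w_m) with each w_i ∈ Z(SU(p)) such that z_i = w_i · x_i^{-a} · y_i^{b} for all i. -/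
open scoped commutatorElement

/-!
Conjugating by `xᵢ` (resp. `yᵢ`) multiplies the other two elements by powers of the central element
`c`; these factors cancel in `wᵢ := zᵢ yᵢ⁻ᵇ xᵢᵃ`, so `wᵢ` commutes with `xᵢ` and `yᵢ`. Since central
elements of `SU(p)` commute with every unitary matrix (a unitary is a scalar times an element of
`SU(p)`) and unitaries span all matrices, `c = ζ • 1` with `ζ` a primitive `p`-th root of unity.
Then `X Y = ζ • Y X` for the matrices of `xᵢ, yᵢ`: if `v` is an eigenvector of `X` for `λ ≠ 0`, the
vectors `Yᵏ v` are eigenvectors for the `p` distinct eigenvalues `ζᵏ λ`. Hence a nonzero subspace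
stable under `X` and `Y` is everything; applied to an eigenspace of the matrix of `wᵢ`, this makes
`wᵢ` scalar, hence central.
-/

namespace Module.End

open Set

variable {K V : Type*} [Field K] [AddCommGroup V] [Module K V]

theorem HasEigenvector.pow_apply_of_mul_eq_smul_mul {A B : End K V} {ζ μ : K} {v : V}
    (hAB : A * B = ζ • (B * A)) (hB : Function.Injective B) (hv : A.HasEigenvector μ v)
    (k : ℕ) : A.HasEigenvector (ζ ^ k * μ) ((B ^ k) v) := by
  induction k with
  | zero => simpa using hv
  | succ k ih =>
    refine ⟨mem_eigenspace_iff.2 ?_, ?_⟩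
    · rw [pow_succ', mul_apply, ← mul_apply A B, hAB, LinearMap.smul_apply, mul_apply,
        ih.apply_eq_smul, map_smul, smul_smul, pow_succ]
      ring_nf
    · rw [pow_succ', mul_apply]
      exact (map_ne_zero_iff B hB).2 ih.2

variable [IsAlgClosed K] [FiniteDimensional K V]

theorem eq_top_of_mapsTo_of_mul_eq_smul_mul {A B : End K V} {ζ : K}
    (hζ : IsPrimitiveRoot ζ (finrank K V)) (hAB : A * B = ζ • (B * A))
    (hA : Function.Injective A) (hB : Function.Injective B) {E : Submodule K V} (hE : E ≠ ⊥)
    (hAE : MapsTo A E E) (hBE : MapsTo B E E) : E = ⊤ := by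
  have : Nontrivial E := Submodule.nontrivial_iff_ne_bot.2 hE
  obtain ⟨μ, hμ⟩ := exists_eigenvalue (A.restrict hAE)
  obtain ⟨w, hw⟩ := hμ.exists_hasEigenvector
  have hv : A.HasEigenvector μ w :=
    ⟨eigenspace_restrict_le_eigenspace A hAE μ ⟨w, hw.1, rfl⟩, by simpa using hw.2⟩
  have hμ0 : μ ≠ 0 := by
    rintro rfl
    exact hv.2 (hA (by simpa using hv.apply_eq_smul))
  have hli : LinearIndependent K fun k : Fin (finrank K V) => (B ^ (k : ℕ)) w :=
    eigenvectors_linearIndependent' A _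
      (fun i j h => Fin.ext (hζ.injOn_pow_mul hμ0 (by simp) (by simp) h)) _
      fun k => hv.pow_apply_of_mul_eq_smul_mul hAB hB k
  have hspan : Submodule.span K (range fun k : Fin (finrank K V) => (B ^ (k : ℕ)) w) ≤ E := by
    rw [Submodule.span_le]
    rintro _ ⟨k, rfl⟩
    change (B ^ (k : ℕ)) w ∈ E
    rw [pow_apply]
    exact (hBE.iterate k) w.2
  refine Submodule.eq_top_of_finrank_eq (le_antisymm (Submodule.finrank_le E) ?_)
  simpa [finrank_span_eq_card hli] using Submodule.finrank_mono hspan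

theorem exists_eq_algebraMap_of_commute {A B W : End K V} {ζ : K}
    (hζ : IsPrimitiveRoot ζ (finrank K V)) (hAB : A * B = ζ • (B * A))
    (hA : Function.Injective A) (hB : Function.Injective B)
    (hWA : Commute W A) (hWB : Commute W B) : ∃ t : K, W = algebraMap K (End K V) t := by
  cases subsingleton_or_nontrivial V
  · exact ⟨0, Subsingleton.elim _ _⟩
  obtain ⟨t, ht⟩ := exists_eigenvalue W
  have htop : W.eigenspace t = ⊤ := eq_top_of_mapsTo_of_mul_eq_smul_mul hζ hAB hA hB ht
    (mapsTo_genEigenspace_of_comm hWA t 1) (mapsTo_genEigenspace_of_comm hWB t 1)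
  refine ⟨t, LinearMap.ext fun v => ?_⟩
  have hv : v ∈ W.eigenspace t := by rw [htop]; exact Submodule.mem_top
  simpa using mem_eigenspace_iff.1 hv

end Module.End

open scoped ComplexOrder in
theorem Matrix.span_unitaryGroup {n : Type*} [Fintype n] [DecidableEq n] :
    Submodule.span ℂ (Matrix.unitaryGroup n ℂ : Set (Matrix n n ℂ)) = ⊤ :=
  CStarAlgebra.span_unitary (A := CStarMatrix n n ℂ)

theorem Matrix.mem_range_scalar_of_commute_of_mul_eq_smul_mul {n K : Type*} [Fintype n]
    [DecidableEq n] [Field K] [IsAlgClosed K] {A B W : Matrix n n K} {ζ : K}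
    (hζ : IsPrimitiveRoot ζ (Fintype.card n)) (hA : IsUnit A) (hB : IsUnit B)
    (hAB : A * B = ζ • (B * A)) (hWA : Commute W A) (hWB : Commute W B) :
    W ∈ Set.range (scalar n) := by
  let f := Matrix.toLinAlgEquiv' (R := K) (n := n)
  have hinj {M : Matrix n n K} (hM : IsUnit M) : Function.Injective (f M) :=
    ((Module.End.isUnit_iff _).1 (hM.map f)).injective
  obtain ⟨t, ht⟩ := Module.End.exists_eq_algebraMap_of_commute
    (by rwa [Module.finrank_fintype_fun_eq_card]) (by rw [← map_mul, hAB, map_smul, map_mul])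
    (hinj hA) (hinj hB) (hWA.map f) (hWB.map f)
  refine ⟨t, f.injective ?_⟩
  rw [ht, ← f.commutes, Matrix.algebraMap_eq_diagonal, Matrix.scalar_apply]
  rfl

theorem Complex.mem_unitary_of_pow_mem {z : ℂ} {n : ℕ} (hn : n ≠ 0) (hz : z ^ n ∈ unitary ℂ) :
    z ∈ unitary ℂ := by
  have hnorm : ‖z‖ = 1 := by
    rw [← pow_eq_one_iff_of_nonneg (norm_nonneg z) hn, ← norm_pow]
    exact CStarRing.norm_of_mem_unitary hz
  rw [Unitary.mem_iff_star_mul_self, RCLike.star_def, RCLike.conj_mul, hnorm]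
  simp

theorem commute_of_commutatorElement_eq {G : Type*} [Group G] {x y z c : G}
    (hc : c ∈ Subgroup.center G) {a b : ℤ} (hxy : ⁅x, y⁆ = c) (hxz : ⁅x, z⁆ = c ^ b)
    (hyz : ⁅y, z⁆ = c ^ a) :
    Commute x (z * y ^ (-b) * x ^ a) ∧ Commute y (z * y ^ (-b) * x ^ a) := by
  have hconj {g h k : G} (hk : ⁅g, h⁆ = k) : MulAut.conj g h = k * h := by
    rw [MulAut.conj_apply, ← hk, commutatorElement_def]; group
  have hcomm (g : G) : Commute c g := (Subgroup.mem_center_iff.1 hc g).symm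
  have hcentral (n : ℤ) (g : G) : c ^ n * g = g * c ^ n := ((hcomm g).zpow_left n).eq
  have hyx : ⁅y, x⁆ = c⁻¹ := by rw [← commutatorElement_inv, hxy]
  constructor <;> rw [commute_iff_eq, ← mul_inv_eq_iff_eq_mul, ← MulAut.conj_apply, map_mul,
    map_mul, map_zpow, map_zpow]
  · rw [hconj hxz, hconj hxy, MulAut.conj_apply, (Commute.refl x).mul_inv_cancel,
      (hcomm y).mul_zpow, hcentral]
    group
  · rw [hconj hyz, hconj hyx, MulAut.conj_apply, (Commute.refl y).mul_inv_cancel]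
    calc c ^ a * z * y ^ (-b) * (c⁻¹ * x) ^ a = c ^ a * (z * y ^ (-b)) * c ^ (-a) * x ^ a := by
          rw [(hcomm x).inv_left.mul_zpow, inv_zpow']
          group
      _ = z * y ^ (-b) * x ^ a := by rw [hcentral]; group

namespace SU

variable {p : ℕ}

theorem mat_mul_s10 (g h : SU p) : (g * h).mat = g.mat * h.mat := rfl

theorem mat_injective_s10 : Function.Injective (SU.mat (p := p)) :=
  fun _ _ h => Subtype.ext (Subtype.ext h)

theorem det_mat_s10 (g : SU p) : g.mat.det = 1 := g.2

theorem isUnit_mat_s10 (g : SU p) : IsUnit g.mat :=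
  (Matrix.isUnit_iff_isUnit_det _).2 (by rw [det_mat_s10]; exact isUnit_one)

theorem exists_eq_smul_mat (hp : p ≠ 0) {U : Matrix (Fin p) (Fin p) ℂ}
    (hU : U ∈ Matrix.unitaryGroup (Fin p) ℂ) : ∃ (s : ℂ) (g : SU p), U = s • g.mat := by
  obtain ⟨s, hs⟩ := IsAlgClosed.exists_pow_nat_eq U.det (Nat.pos_of_ne_zero hp)
  have hsu : s ∈ unitary ℂ := Complex.mem_unitary_of_pow_mem hp (hs ▸ Matrix.det_of_mem_unitary hU)
  have hdet : (star s • U).det = 1 := by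
    rw [Matrix.det_smul, Fintype.card_fin, ← star_pow, hs,
      Unitary.star_mul_self_of_mem (Matrix.det_of_mem_unitary hU)]
  refine ⟨s, ⟨⟨star s • U, Unitary.smul_mem_of_mem (Unitary.star_mem hsu) hU⟩, hdet⟩, ?_⟩
  change U = s • star s • U
  rw [smul_smul, Unitary.mul_star_self_of_mem hsu, one_smul]

theorem mat_mem_range_scalar_of_mem_center (hp : p ≠ 0) {c : SU p}
    (hc : c ∈ Subgroup.center (SU p)) : c.mat ∈ Set.range (Matrix.scalar (Fin p)) := by
  have hunitary : ∀ U ∈ Matrix.unitaryGroup (Fin p) ℂ, Commute U c.mat := by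
    intro U hU
    obtain ⟨s, g, rfl⟩ := exists_eq_smul_mat hp hU
    have hg : Commute g.mat c.mat := congrArg SU.mat (Subgroup.mem_center_iff.1 hc g)
    exact hg.smul_left s
  have hall (M : Matrix (Fin p) (Fin p) ℂ) : Commute M c.mat := by
    have hM : M ∈ Submodule.span ℂ (Matrix.unitaryGroup (Fin p) ℂ : Set _) := by
      rw [Matrix.span_unitaryGroup]; trivial
    induction hM using Submodule.span_induction with
    | mem U hU => exact hunitary U hU
    | zero => exact Commute.zero_left _
    | add M N _ _ hM hN => exact hM.add_left hN
    | smul s M _ hM => exact hM.smul_left s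
  exact Matrix.mem_range_scalar_of_commute_single fun i j _ => hall _

theorem mem_center_of_mat_mem_range_scalar {g : SU p}
    (hg : g.mat ∈ Set.range (Matrix.scalar (Fin p))) : g ∈ Subgroup.center (SU p) := by
  obtain ⟨t, ht⟩ := hg
  refine Subgroup.mem_center_iff.2 fun h => mat_injective_s10 ?_
  rw [mat_mul_s10, mat_mul_s10, ← ht]
  exact (Matrix.scalar_commute t (Commute.all t) h.mat).symm.eq

theorem isPrimitiveRoot_of_mat_eq_scalar (hp : p.Prime) {c : SU p} {ζ : ℂ}
    (hζ : Matrix.scalar (Fin p) ζ = c.mat) (hc1 : c ≠ 1) : IsPrimitiveRoot ζ p := by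
  have : Fact p.Prime := ⟨hp⟩
  have hpow : ζ ^ p = 1 := by
    simpa [Matrix.scalar_apply, ← hζ] using det_mat_s10 c
  have hne : ζ ≠ 1 := by
    rintro rfl
    exact hc1 (mat_injective_s10 (by simpa using hζ.symm : c.mat = 1))
  exact orderOf_eq_prime hpow hne ▸ IsPrimitiveRoot.orderOf ζ

theorem mat_mul_eq_smul_mul {g h c : SU p} {ζ : ℂ} (hgh : ⁅g, h⁆ = c)
    (hζ : Matrix.scalar (Fin p) ζ = c.mat) : g.mat * h.mat = ζ • (h.mat * g.mat) := by
  have hgh' : g * h = c * (h * g) := by rw [← hgh, commutatorElement_def]; group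
  rw [← mat_mul_s10, hgh', mat_mul_s10, ← hζ, Matrix.scalar_apply, Matrix.smul_eq_diagonal_mul, mat_mul_s10]

end SU

theorem almost_commuting_triple_structure_general (p m : ℕ) (hp : p.Prime)
    (c : SU p) (hc : c ∈ Subgroup.center (SU p)) (hc1 : c ≠ 1)
    (x y z : Fin m → SU p) (a b : ℕ)
    (hxy : ∀ i, ⁅x i, y i⁆ = c)
    (hxz : ∀ i, ⁅x i, z i⁆ = c ^ b)
    (hyz : ∀ i, ⁅y i, z i⁆ = c ^ a) :
    ∃ w : Fin m → SU p, (∀ i, w i ∈ Subgroup.center (SU p)) ∧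
      ∀ i, z i = w i * (x i) ^ (-(a : ℤ)) * (y i) ^ (b : ℤ) := by
  obtain ⟨ζ, hζ⟩ := SU.mat_mem_range_scalar_of_mem_center hp.ne_zero hc
  have hprim : IsPrimitiveRoot ζ (Fintype.card (Fin p)) := by
    rw [Fintype.card_fin]; exact SU.isPrimitiveRoot_of_mat_eq_scalar hp hζ hc1
  refine ⟨fun i => z i * y i ^ (-(b : ℤ)) * x i ^ (a : ℤ), fun i => ?_, fun i => by group⟩
  obtain ⟨hx, hy⟩ := commute_of_commutatorElement_eq hc (hxy i)
    (by rw [hxz i, zpow_natCast]) (by rw [hyz i, zpow_natCast])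
  exact SU.mem_center_of_mat_mem_range_scalar <|
    Matrix.mem_range_scalar_of_commute_of_mul_eq_smul_mul hprim (SU.isUnit_mat_s10 _)
      (SU.isUnit_mat_s10 _) (SU.mat_mul_eq_smul_mul (hxy i) hζ) (congrArg SU.mat hx).symm
      (congrArg SU.mat hy).symm

/-- For a prime `p`, `m ≥ 1`, a nontrivial central element `c` of `SU(p)`, and tuples
`x, y, z ∈ SU(p)^m` with `⁅xᵢ, yᵢ⁆ = c`, `⁅xᵢ, zᵢ⁆ = c^b` and `⁅yᵢ, zᵢ⁆ = c^a` for all `i`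
(with `0 ≤ a, b < p`), there is a central tuple `w` with `zᵢ = wᵢ · xᵢ⁻ᵃ · yᵢᵇ` for all `i`. -/
theorem almost_commuting_triple_structure (p m : ℕ) (hp : p.Prime) (hm : 1 ≤ m)
    (c : SU p) (hc : c ∈ Subgroup.center (SU p)) (hc1 : c ≠ 1)
    (x y z : Fin m → SU p) (a b : ℕ) (ha : a < p) (hb : b < p)
    (hxy : ∀ i, ⁅x i, y i⁆ = c)
    (hxz : ∀ i, ⁅x i, z i⁆ = c ^ b)
    (hyz : ∀ i, ⁅y i, z i⁆ = c ^ a) :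
    ∃ w : Fin m → SU p, (∀ i, w i ∈ Subgroup.center (SU p)) ∧
      ∀ i, z i = w i * (x i) ^ (-(a : ℤ)) * (y i) ^ (b : ℤ) :=
  almost_commuting_triple_structure_general p m hp c hc hc1 x y z a b hxy hxz hyz
end

section
/- Let p be a prime, m ≥ 1 and n ≥ 1. Let B_n = {(x̲_1,...,x̲_n) ∈ (SU(p)^m)^n : [x̲_i, x̲_j] ∈ Δ(Z/p) for all i,j} with the subspace topology. Then the map B_n → (Δ(Z/p))^{n×n} sending (x̲_1,...,x̲_n) to the matrix of commutators ([x̲_i, x̲_j])_{i,j} is locally constant; consequently, for each antisymmetric n×n matrix C with entries in Δ(Z/p), the subspace Hom(Z^n, G_{m,p})_C, consisting of commuting n-tuples in G_{m,p} possessing a lift to B_n whose commutator matrix equals C, is both open and closed in Hom(Z^n, G_{m,p}). -/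
open scoped commutatorElement

/-- `B_n`: the space of `n`-tuples in `SU(p)^m` that commute up to elements of the
diagonal central subgroup `Δ(Z/p)`. -/
def Bset (p m n : ℕ) : Set (Fin n → (Fin m → SU p)) :=
  {x | ∀ i j, ⁅x i, x j⁆ ∈ DeltaZp p m}

/-- The map `B_n → Hom(Z^n, G_{m,p})` obtained by applying the quotient homomorphism
`SU(p)^m → G_{m,p}` in each coordinate. -/
def BtoHom (p m n : ℕ) : Bset p m n → commTuples (Gmp p m) n := fun x =>
  ⟨fun i => QuotientGroup.mk (x.1 i), by
    intro i j
    apply commutatorElement_eq_one_iff_commute.mp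
    show ⁅(QuotientGroup.mk' (DeltaZp p m)) (x.1 i), (QuotientGroup.mk' (DeltaZp p m)) (x.1 j)⁆ = 1
    rw [← map_commutatorElement (QuotientGroup.mk' (DeltaZp p m))]
    exact (QuotientGroup.eq_one_iff _).mpr (x.2 i j)⟩

/-!
A central element of `SU(p)` commutes with a scalar multiple of every unitary matrix, hence with
every matrix, since the unitaries span the matrix algebra; so it is a scalar `c` with `c ^ p = 1`.
Thus `Δ(Z/p)` is finite, hence discrete, and the continuous commutator-matrix map on `B_n` is
locally constant. Multiplying the entries of a tuple by central elements does not change its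
commutators, so this map is constant on the fibres of the surjective open map
`B_n → Hom(Z^n, G_{m,p})`. Then `Hom(Z^n, G_{m,p})_C`, the image of the clopen fibre over `C`, has
as complement the image of the complementary clopen set, so it is clopen.
-/

open Matrix

lemma SU.exists_smul_mem {p : ℕ} (hp : 0 < p) (U : unitaryGroup (Fin p) ℂ) :
    ∃ c : ℂ, c ≠ 0 ∧ ∃ x : SU p, SU.mat x = c • (U : Matrix (Fin p) (Fin p) ℂ) := by
  obtain ⟨c, hc⟩ := IsAlgClosed.exists_pow_nat_eq (U : Matrix (Fin p) (Fin p) ℂ).det⁻¹ hp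
  have hdet : ‖(U : Matrix (Fin p) (Fin p) ℂ).det‖ = 1 :=
    CStarRing.norm_of_mem_unitary (det_of_mem_unitary U.2)
  have hc_norm : ‖c‖ = 1 := by
    rw [← pow_eq_one_iff_of_nonneg (norm_nonneg c) hp.ne', ← norm_pow, hc, norm_inv, hdet,
      inv_one]
  have hc_unitary : c ∈ unitary ℂ := by
    rw [Unitary.mem_iff_star_mul_self, RCLike.star_def, RCLike.conj_mul, hc_norm]
    simp
  have hc0 : c ≠ 0 := by rintro rfl; simp at hc_norm
  refine ⟨c, hc0, ⟨⟨c • (U : Matrix (Fin p) (Fin p) ℂ), Unitary.smul_mem_of_mem hc_unitary U.2⟩,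
    ?_⟩, rfl⟩
  change (c • (U : Matrix (Fin p) (Fin p) ℂ)).det = 1
  rw [det_smul, Fintype.card_fin, hc, inv_mul_cancel₀ (norm_ne_zero_iff.mp (hdet ▸ one_ne_zero))]

open scoped Matrix.Norms.L2Operator in
lemma SU.mat_mem_range_scalar_of_mem_center_s13 {p : ℕ} {A : SU p}
    (hA : A ∈ Subgroup.center (SU p)) : SU.mat A ∈ Set.range (scalar (Fin p)) := by
  rcases p.eq_zero_or_pos with rfl | hp
  · exact ⟨0, Subsingleton.elim _ _⟩
  suffices h : (⊤ : Submodule ℂ (Matrix (Fin p) (Fin p) ℂ)) ≤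
      Subalgebra.toSubmodule (Subalgebra.centralizer ℂ {SU.mat A}) by
    rw [← center_eq_range, Semigroup.mem_center_iff]
    intro M
    simpa [Subalgebra.mem_centralizer_iff, eq_comm] using h (Submodule.mem_top (x := M))
  rw [← CStarAlgebra.span_unitary, Submodule.span_le]
  intro U hU
  rw [SetLike.mem_coe, Subalgebra.mem_toSubmodule, Subalgebra.mem_centralizer_iff]
  obtain ⟨c, hc, x, hx⟩ := SU.exists_smul_mem hp ⟨U, hU⟩
  have hcomm : Commute (SU.mat A) (c • U) := by
    rw [← hx]; exact congrArg SU.mat (Subgroup.mem_center_iff.mp hA x).symm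
  rintro _ rfl
  have hcommU := (hcomm.smul_right c⁻¹).eq
  rwa [smul_smul, inv_mul_cancel₀ hc, one_smul] at hcommU

instance SU.finite_center (p : ℕ) : Finite (Subgroup.center (SU p)) := by
  rcases p.eq_zero_or_pos with rfl | hp
  · have : Subsingleton (SU 0) := ⟨fun x y => Subtype.ext (Subtype.ext (Subsingleton.elim _ _))⟩
    infer_instance
  have hroots : {c : ℂ | c ^ p = 1}.Finite :=
    (Polynomial.nthRoots p (1 : ℂ)).toFinset.finite_toSet.subset fun c hc => by
      simpa [Polynomial.mem_nthRoots hp] using hc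
  have hmat_inj : Function.Injective (SU.mat (p := p)) :=
    Subtype.val_injective.comp Subtype.val_injective
  refine Set.Finite.to_subtype
    ((hroots.image (scalar (Fin p))).preimage hmat_inj.injOn |>.subset ?_)
  intro A hA
  obtain ⟨c, hc⟩ := SU.mat_mem_range_scalar_of_mem_center_s13 hA
  refine ⟨c, ?_, hc⟩
  have hdet : (SU.mat A).det = 1 := A.2
  simpa [← hc] using hdet

instance DeltaZp.finite (p m : ℕ) : Finite (DeltaZp p m) :=
  ((Set.finite_coe_iff.mp (SU.finite_center p)).image _).to_subtype

instance DeltaZp.discreteTopology (p m : ℕ) : DiscreteTopology (DeltaZp p m) :=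
  Finite.instDiscreteTopology

lemma DeltaZp_le_center (p m : ℕ) : DeltaZp p m ≤ Subgroup.center (Fin m → SU p) := by
  rw [DeltaZp, Subgroup.map_le_iff_le_comap]
  intro z hz
  rw [Subgroup.mem_comap, Subgroup.mem_center_iff]
  intro g
  funext i
  exact Subgroup.mem_center_iff.mp hz (g i)

lemma commutatorElement_mul_mem_center {G : Type*} [Group G] (a b : G) {z w : G}
    (hz : z ∈ Subgroup.center G) (hw : w ∈ Subgroup.center G) : ⁅a * z, b * w⁆ = ⁅a, b⁆ := by
  have hzc : ⁅z, b * w⁆ = 1 :=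
    commutatorElement_eq_one_iff_commute.mpr (Subgroup.mem_center_iff.mp hz (b * w)).symm
  have hwc : ⁅a, w⁆ = 1 :=
    commutatorElement_eq_one_iff_commute.mpr (Subgroup.mem_center_iff.mp hw a)
  rw [commutatorElement_mul_left_eq_conj_mul, hzc, mul_one, mul_inv_cancel, one_mul,
    commutatorElement_mul_right_eq_mul_conj, hwc, mul_one, mul_inv_cancel_right]

namespace QuotientGroup

variable {G : Type*} [Group G] {N : Subgroup G}

lemma commute_mk_iff [N.Normal] {a b : G} : Commute (a : G ⧸ N) (b : G ⧸ N) ↔ ⁅a, b⁆ ∈ N := by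
  rw [← commutatorElement_eq_one_iff_commute, ← eq_one_iff]
  exact Iff.of_eq (congrArg (· = 1) (map_commutatorElement (mk' N) a b).symm)

lemma commutatorElement_eq_of_mk_eq (hN : N ≤ Subgroup.center G) {a a' b b' : G}
    (ha : (a : G ⧸ N) = a') (hb : (b : G ⧸ N) = b') : ⁅a, b⁆ = ⁅a', b'⁆ := by
  obtain ⟨z, hz, rfl⟩ : ∃ z ∈ N, a' = a * z := ⟨a⁻¹ * a', QuotientGroup.eq.mp ha, by group⟩
  obtain ⟨w, hw, rfl⟩ : ∃ w ∈ N, b' = b * w := ⟨b⁻¹ * b', QuotientGroup.eq.mp hb, by group⟩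
  exact (commutatorElement_mul_mem_center a b (hN hz) (hN hw)).symm

end QuotientGroup

lemma IsOpenMap.isClopen_image_preimage {X Y Z : Type*} [TopologicalSpace X] [TopologicalSpace Y]
    [TopologicalSpace Z] {f : X → Y} (hf : IsOpenMap f) (hsurj : Function.Surjective f)
    {g : X → Z} (hg : IsLocallyConstant g) (hfib : ∀ x y, f x = f y → g x = g y) (S : Set Z) :
    IsClopen (f '' (g ⁻¹' S)) := by
  have hcompl : (f '' (g ⁻¹' S))ᶜ = f '' (g ⁻¹' Sᶜ) := by
    ext y
    obtain ⟨x, rfl⟩ := hsurj y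
    constructor
    · exact fun hx => ⟨x, fun hxS => hx ⟨x, hxS, rfl⟩, rfl⟩
    · rintro ⟨x', hx'S, hx'x⟩ ⟨x'', hx''S, hx''x⟩
      exact hx'S (hfib x'' x' (hx''x.trans hx'x.symm) ▸ hx''S)
  exact ⟨isOpen_compl_iff.mp (hcompl ▸ hf _ (hg Sᶜ)), hf _ (hg S)⟩

section CommutatorMatrix

variable (p m n : ℕ)

lemma Bset_eq_preimage :
    Bset p m n = Pi.map (fun _ => QuotientGroup.mk) ⁻¹' commTuples (Gmp p m) n := by
  ext x
  exact forall₂_congr fun i j => QuotientGroup.commute_mk_iff.symm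

lemma BtoHom_isOpenMap : IsOpenMap (BtoHom p m n) := by
  have hP : IsOpenMap (Pi.map fun _ : Fin n => (QuotientGroup.mk : (Fin m → SU p) → Gmp p m)) :=
    IsOpenMap.piMap (fun _ => QuotientGroup.isOpenMap_coe)
      (Filter.Eventually.of_forall fun _ => QuotientGroup.mk_surjective)
  exact (hP.restrictPreimage _).comp (Homeomorph.setCongr (Bset_eq_preimage p m n)).isOpenMap

lemma BtoHom_surjective : Function.Surjective (BtoHom p m n) := by
  intro y
  have hlift : Pi.map (fun _ => QuotientGroup.mk) (fun i => (y.1 i).out) = y.1 :=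
    funext fun i => QuotientGroup.out_eq' (y.1 i)
  have hmem : (fun i => (y.1 i).out) ∈ Bset p m n := by
    rw [Bset_eq_preimage, Set.mem_preimage, hlift]
    exact y.2
  exact ⟨⟨_, hmem⟩, Subtype.ext hlift⟩

def commMatrix (x : Bset p m n) : Fin n → Fin n → DeltaZp p m :=
  fun i j => ⟨⁅x.1 i, x.1 j⁆, x.2 i j⟩

lemma commMatrix_isLocallyConstant : IsLocallyConstant (commMatrix p m n) := by
  rw [IsLocallyConstant.iff_continuous]
  refine continuous_pi fun i => continuous_pi fun j => Continuous.subtype_mk ?_ _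
  have hcoord (k : Fin n) : Continuous fun x : Bset p m n => x.1 k :=
    (continuous_apply k).comp continuous_subtype_val
  simp only [commutatorElement_def]
  exact (((hcoord i).mul (hcoord j)).mul (hcoord i).inv).mul (hcoord j).inv

variable {p m n} in
lemma commMatrix_eq_of_BtoHom_eq {x y : Bset p m n} (h : BtoHom p m n x = BtoHom p m n y) :
    commMatrix p m n x = commMatrix p m n y := by
  funext i j
  exact Subtype.ext <| QuotientGroup.commutatorElement_eq_of_mk_eq (DeltaZp_le_center p m)
    (congrFun (congrArg Subtype.val h) i) (congrFun (congrArg Subtype.val h) j)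

lemma BtoHom_image_commMatrix_fiber (C : Fin n → Fin n → DeltaZp p m) :
    BtoHom p m n '' (commMatrix p m n ⁻¹' {C}) = {y : commTuples (Gmp p m) n |
      ∃ x : Fin n → (Fin m → SU p), (∀ i, QuotientGroup.mk (x i) = (y : Fin n → Gmp p m) i) ∧
        ∀ i j, ⁅x i, x j⁆ = (C i j : Fin m → SU p)} := by
  ext y
  constructor
  · rintro ⟨x, hxC, rfl⟩
    exact ⟨x.1, fun i => rfl, fun i j => congrArg Subtype.val (congrFun (congrFun hxC i) j)⟩
  · rintro ⟨x, hxy, hxC⟩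
    have hx : x ∈ Bset p m n := fun i j => hxC i j ▸ (C i j).2
    exact ⟨⟨x, hx⟩, funext fun i => funext fun j => Subtype.ext (hxC i j),
      Subtype.ext (funext hxy)⟩

end CommutatorMatrix

theorem commutatorMatrix_locallyConstant_general (p m n : ℕ) :
    IsLocallyConstant (fun x : Bset p m n => fun i j : Fin n =>
      (⟨⁅(x : Fin n → Fin m → SU p) i, (x : Fin n → Fin m → SU p) j⁆, x.2 i j⟩ :
        DeltaZp p m)) ∧
    ∀ C : Fin n → Fin n → ↥(DeltaZp p m),
      (∀ i, C i i = 1) → (∀ i j, C j i = (C i j)⁻¹) →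
      (IsOpen {y : commTuples (Gmp p m) n |
        ∃ x : Fin n → (Fin m → SU p),
          (∀ i, QuotientGroup.mk (x i) = (y : Fin n → Gmp p m) i) ∧
          ∀ i j, ⁅x i, x j⁆ = (C i j : Fin m → SU p)} ∧
      IsClosed {y : commTuples (Gmp p m) n |
        ∃ x : Fin n → (Fin m → SU p),
          (∀ i, QuotientGroup.mk (x i) = (y : Fin n → Gmp p m) i) ∧
          ∀ i j, ⁅x i, x j⁆ = (C i j : Fin m → SU p)}) := by
  refine ⟨commMatrix_isLocallyConstant p m n, fun C _ _ => ?_⟩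
  have hclopen := (BtoHom_isOpenMap p m n).isClopen_image_preimage (BtoHom_surjective p m n)
    (commMatrix_isLocallyConstant p m n) (fun _ _ => commMatrix_eq_of_BtoHom_eq) {C}
  rw [BtoHom_image_commMatrix_fiber] at hclopen
  exact ⟨hclopen.isOpen, hclopen.isClosed⟩

/-- For a prime `p`, `m ≥ 1` and `n ≥ 1`, the commutator-matrix map on `B_n` is locally
constant; consequently, for each antisymmetric matrix `C` with entries in `Δ(Z/p)`, the
subspace `Hom(Z^n, G_{m,p})_C` of commuting tuples admitting a lift with commutator matrix
`C` is both open and closed in `Hom(Z^n, G_{m,p})`. -/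
theorem commutatorMatrix_locallyConstant (p m n : ℕ) (hp : p.Prime) (hm : 1 ≤ m)
    (hn : 1 ≤ n) :
    IsLocallyConstant (fun x : Bset p m n => fun i j : Fin n =>
      (⟨⁅(x : Fin n → Fin m → SU p) i, (x : Fin n → Fin m → SU p) j⁆, x.2 i j⟩ :
        DeltaZp p m)) ∧
    ∀ C : Fin n → Fin n → ↥(DeltaZp p m),
      (∀ i, C i i = 1) → (∀ i j, C j i = (C i j)⁻¹) →
      (IsOpen {y : commTuples (Gmp p m) n |
        ∃ x : Fin n → (Fin m → SU p),
          (∀ i, QuotientGroup.mk (x i) = (y : Fin n → Gmp p m) i) ∧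
          ∀ i j, ⁅x i, x j⁆ = (C i j : Fin m → SU p)} ∧
      IsClosed {y : commTuples (Gmp p m) n |
        ∃ x : Fin n → (Fin m → SU p),
          (∀ i, QuotientGroup.mk (x i) = (y : Fin n → Gmp p m) i) ∧
          ∀ i j, ⁅x i, x j⁆ = (C i j : Fin m → SU p)}) :=
  commutatorMatrix_locallyConstant_general p m n
end
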